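/- The generating function for stacks with summits satisfies ∑_{m ≥ 0} q^m/((q;q)_m)² = ((q;q)_∞)^{-2} (1 - L(q)), where L(q) := ∑_{n ≥ 1} (-1)^{n-1} q^{n(n+1)/2}, as an identity of formal power series. -/

import Mathlib

open PowerSeries

/-- The q-Pochhammer symbol `(q;q)_m = ∏_{j=1}^m (1 - q^j)`. -/
noncomputable def qPoch (m : ℕ) : PowerSeries ℚ :=
  ∏ j ∈ Finset.range m, (1 - PowerSeries.X ^ (j + 1))

/-- The infinite product `(q;q)_∞`, defined coefficientwise. -/
noncomputable def qPochInf : PowerSeries ℚ :=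
  PowerSeries.mk fun n => PowerSeries.coeff n (qPoch (n + 1))

/-- The formal sum `∑_{m ≥ 0} F m` of a family of power series in which the `m`-th
term has order at least `m`, defined coefficientwise. -/
noncomputable def formalSum (F : ℕ → PowerSeries ℚ) : PowerSeries ℚ :=
  PowerSeries.mk fun n => ∑ m ∈ Finset.range (n + 1), PowerSeries.coeff n (F m)

/-- The false theta function `L(q) = ∑_{n ≥ 1} (-1)^{n-1} q^{n(n+1)/2}`
(the sum over `n ≥ 1` is reindexed by `n = k + 1`). -/
noncomputable def falseTheta : PowerSeries ℚ :=
  formalSum fun k => (-1 : PowerSeries ℚ) ^ k * X ^ ((k + 1) * (k + 2) / 2)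

/-!
Write `f m = (q^{m+1};q)_∞`, so that `(q;q)_∞² q^m / (q;q)_m² = q^m (f m)²`, and put
`V j = ∑_m q^m f m f (m+j)`. Since `f m = (1 - q^{m+1}) f (m+1)`, the terms of
`V j + q^{j+1} V (j+1)` telescope: they are `G (m+1) - G m` for
`G m = (1 - q^m) f m f (m+j)`, which vanishes at `m = 0` and tends to `1`.
Hence `V j + q^{j+1} V (j+1) = 1`, and iterating from `j = 0` gives
`V 0 = 1 - q + q^3 - q^6 + ⋯ = 1 - L(q)`.
-/

open Finset

section Tail

variable {R : Type*} [CommRing R]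

theorem coeff_mul_one_sub_X_pow_of_lt (A : R⟦X⟧) {n e : ℕ} (h : n < e) :
    coeff n (A * (1 - X ^ e)) = coeff n A := by
  rw [mul_sub, mul_one, map_sub, coeff_mul_X_pow', if_neg (by omega), sub_zero]

theorem coeff_X_pow_mul_of_lt (A : R⟦X⟧) {n e : ℕ} (h : n < e) : coeff n (X ^ e * A) = 0 := by
  rw [coeff_X_pow_mul', if_neg (by omega)]

theorem coeff_mul_eq_of_coeff_eq {A B : R⟦X⟧} (C : R⟦X⟧) {n : ℕ}
    (h : ∀ k ≤ n, coeff k A = coeff k B) : coeff n (C * A) = coeff n (C * B) := by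
  rw [coeff_mul, coeff_mul]
  refine sum_congr rfl fun p hp => ?_
  rw [h p.2 (by rw [HasAntidiagonal.mem_antidiagonal] at hp; omega)]

theorem coeff_prod_one_sub_X_pow_of_le {a n M N : ℕ} (hn : n < a + M) (hMN : M ≤ N) :
    coeff n (∏ j ∈ range N, (1 - X ^ (a + j)) : R⟦X⟧) =
      coeff n (∏ j ∈ range M, (1 - X ^ (a + j)) : R⟦X⟧) := by
  induction N, hMN using Nat.le_induction with
  | base => rfl
  | succ N hMN ih => rw [prod_range_succ, coeff_mul_one_sub_X_pow_of_lt _ (by omega), ih]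

variable (R) in
/-- The tail product `(q^a;q)_∞`. -/
noncomputable def qPochTail (a : ℕ) : R⟦X⟧ :=
  mk fun n => coeff n (∏ j ∈ range n, (1 - X ^ (a + j)) : R⟦X⟧)

theorem coeff_qPochTail_of_le {a n N : ℕ} (ha : 0 < a) (h : n ≤ N) :
    coeff n (qPochTail R a) = coeff n (∏ j ∈ range N, (1 - X ^ (a + j)) : R⟦X⟧) := by
  rw [qPochTail, coeff_mk, coeff_prod_one_sub_X_pow_of_le (by omega) h]

theorem coeff_qPochTail_of_lt {a n : ℕ} (h : n < a) :
    coeff n (qPochTail R a) = coeff n (1 : R⟦X⟧) := by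
  rw [qPochTail, coeff_mk, coeff_prod_one_sub_X_pow_of_le (M := 0) (by omega) (Nat.zero_le n),
    prod_range_zero]

theorem qPochTail_eq_one_sub_X_pow_mul {a : ℕ} (ha : 0 < a) :
    qPochTail R a = (1 - X ^ a) * qPochTail R (a + 1) := by
  ext n
  have hshift : ∏ j ∈ range (n + 1), (1 - X ^ (a + j)) =
      (1 - X ^ a) * ∏ j ∈ range n, (1 - X ^ (a + 1 + j) : R⟦X⟧) := by
    rw [prod_range_succ', add_zero, mul_comm]
    simp only [← add_assoc, add_right_comm a]
  rw [coeff_qPochTail_of_le ha n.le_succ, hshift]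
  exact coeff_mul_eq_of_coeff_eq _ fun k hk => (coeff_qPochTail_of_le (by omega) hk).symm

theorem qPochTail_eq_prod_mul {a : ℕ} (ha : 0 < a) (m : ℕ) :
    qPochTail R a = (∏ j ∈ range m, (1 - X ^ (a + j))) * qPochTail R (a + m) := by
  induction m with
  | zero => simp
  | succ m ih =>
    rw [ih, qPochTail_eq_one_sub_X_pow_mul (by omega : 0 < a + m), prod_range_succ, mul_assoc,
      ← add_assoc]

end Tail

theorem qPoch_eq_prod (m : ℕ) : qPoch m = ∏ j ∈ range m, (1 - X ^ (1 + j)) := by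
  simp only [qPoch, add_comm 1]

theorem qPochInf_eq_qPochTail : qPochInf = qPochTail ℚ 1 := by
  ext n
  rw [qPochInf, coeff_mk, coeff_qPochTail_of_le one_pos n.le_succ, qPoch_eq_prod]

theorem qPoch_mul_qPochTail (m : ℕ) : qPoch m * qPochTail ℚ (m + 1) = qPochInf := by
  rw [qPochInf_eq_qPochTail, qPochTail_eq_prod_mul one_pos m, qPoch_eq_prod, add_comm]

theorem constantCoeff_qPoch (m : ℕ) : constantCoeff (qPoch m) = 1 := by
  simp [qPoch, map_prod]

theorem constantCoeff_qPochInf : constantCoeff qPochInf = 1 := by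
  rw [← coeff_zero_eq_constantCoeff_apply, qPochInf, coeff_mk, coeff_zero_eq_constantCoeff_apply,
    constantCoeff_qPoch]

theorem coeff_formalSum (F : ℕ → ℚ⟦X⟧) (n : ℕ) :
    coeff n (formalSum F) = ∑ m ∈ range (n + 1), coeff n (F m) :=
  coeff_mk _ _

theorem formalSum_add (F G : ℕ → ℚ⟦X⟧) :
    formalSum F + formalSum G = formalSum fun m => F m + G m := by
  ext n
  simp only [map_add, coeff_formalSum, sum_add_distrib]

theorem mul_formalSum (C : ℚ⟦X⟧) {F : ℕ → ℚ⟦X⟧}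
    (hF : ∀ m k, k < m → coeff k (F m) = 0) :
    C * formalSum F = formalSum fun m => C * F m := by
  ext n
  rw [coeff_mul, coeff_formalSum]
  calc
    ∑ p ∈ antidiagonal n, coeff p.1 C * coeff p.2 (formalSum F)
        = ∑ p ∈ antidiagonal n, ∑ m ∈ range (n + 1), coeff p.1 C * coeff p.2 (F m) := by
      refine sum_congr rfl fun p hp => ?_
      rw [HasAntidiagonal.mem_antidiagonal] at hp
      rw [coeff_formalSum, mul_sum]
      refine sum_subset (range_subset_range.2 (by omega)) fun m _ hm => ?_
      rw [mem_range, not_lt] at hm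
      rw [hF m p.2 (by omega), mul_zero]
    _ = ∑ m ∈ range (n + 1), ∑ p ∈ antidiagonal n, coeff p.1 C * coeff p.2 (F m) := sum_comm
    _ = ∑ m ∈ range (n + 1), coeff n (C * F m) := by simp only [coeff_mul]

theorem formalSum_telescope {G : ℕ → ℚ⟦X⟧} {L : ℚ⟦X⟧} (h0 : G 0 = 0)
    (hlim : ∀ n, coeff n (G (n + 1)) = coeff n L) :
    formalSum (fun m => G (m + 1) - G m) = L := by
  ext n
  simp only [coeff_formalSum, map_sub]
  rw [sum_range_sub (fun m => coeff n (G m)), h0, map_zero, sub_zero, hlim]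

/-- `V j = ∑_m q^m (q^{m+1};q)_∞ (q^{m+j+1};q)_∞`. -/
noncomputable def tailPairSum (j : ℕ) : ℚ⟦X⟧ :=
  formalSum fun m => X ^ m * (qPochTail ℚ (m + 1) * qPochTail ℚ (m + j + 1))

theorem tailPairSum_add_X_pow_mul (j : ℕ) :
    tailPairSum j + X ^ (j + 1) * tailPairSum (j + 1) = 1 := by
  set f : ℕ → ℚ⟦X⟧ := fun m => qPochTail ℚ (m + 1)
  have hf (m : ℕ) : f m = (1 - X ^ (m + 1)) * f (m + 1) :=
    qPochTail_eq_one_sub_X_pow_mul m.succ_pos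
  set G : ℕ → ℚ⟦X⟧ := fun i => (1 - X ^ i) * f i * f (i + j)
  have hstep (m : ℕ) : X ^ m * (f m * f (m + j)) + X ^ (j + 1) * (X ^ m * (f m * f (m + j + 1))) =
      G (m + 1) - G m := by
    simp only [G]
    rw [← hf m, add_right_comm m 1 j, hf (m + j)]
    ring
  have hG0 : G 0 = 0 := by simp [G]
  have hlim (n : ℕ) : coeff n (G (n + 1)) = coeff n (1 : ℚ⟦X⟧) := by
    have hlow (i : ℕ) (hi : n ≤ i) : ∀ k ≤ n, coeff k (f i) = coeff k (1 : ℚ⟦X⟧) :=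
      fun k hk => coeff_qPochTail_of_lt (show k < i + 1 by omega)
    simp only [G, ← hf n]
    rw [coeff_mul_eq_of_coeff_eq _ (hlow (n + 1 + j) (by omega)), mul_one, ← one_mul (f n),
      coeff_mul_eq_of_coeff_eq _ (hlow n le_rfl), mul_one]
  rw [tailPairSum, tailPairSum, mul_formalSum _ fun m k h => coeff_X_pow_mul_of_lt _ h,
    formalSum_add, ← formalSum_telescope hG0 hlim]
  exact congrArg formalSum (funext hstep)

theorem add_one_mul_add_two_div_two (k : ℕ) :
    (k + 1) * (k + 2) / 2 = k * (k + 1) / 2 + (k + 1) := by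
  rw [show (k + 1) * (k + 2) = k * (k + 1) + (k + 1) * 2 by ring, Nat.add_mul_div_right _ _ two_pos]

theorem eq_sum_add_of_add_X_pow_mul {V : ℕ → ℚ⟦X⟧}
    (hV : ∀ j, V j + X ^ (j + 1) * V (j + 1) = 1) (K : ℕ) :
    V 0 = ∑ k ∈ range K, (-1) ^ k * X ^ (k * (k + 1) / 2) +
      (-1) ^ K * X ^ (K * (K + 1) / 2) * V K := by
  induction K with
  | zero => simp
  | succ K ih =>
    have hexp : (K + 1) * (K + 1 + 1) / 2 = K * (K + 1) / 2 + (K + 1) :=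
      add_one_mul_add_two_div_two K
    rw [ih, sum_range_succ, hexp, pow_add]
    linear_combination (-1) ^ K * X ^ (K * (K + 1) / 2) * hV K

theorem eq_one_sub_falseTheta_of_add_X_pow_mul {V : ℕ → ℚ⟦X⟧}
    (hV : ∀ j, V j + X ^ (j + 1) * V (j + 1) = 1) : V 0 = 1 - falseTheta := by
  ext n
  have hpartial : ∑ k ∈ range (n + 2), (-1) ^ k * X ^ (k * (k + 1) / 2) =
      1 - ∑ k ∈ range (n + 1), (-1 : ℚ⟦X⟧) ^ k * X ^ ((k + 1) * (k + 2) / 2) := by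
    rw [sum_range_succ', sub_eq_neg_add, ← sum_neg_distrib]
    simp only [pow_succ, mul_neg_one, neg_mul, zero_mul, Nat.zero_div, pow_zero, mul_one]
  have htail : coeff n ((-1) ^ (n + 2) * X ^ ((n + 2) * (n + 2 + 1) / 2) * V (n + 2)) = 0 := by
    have : n < (n + 2) * (n + 2 + 1) / 2 := by
      change n < (n + 1 + 1) * (n + 1 + 2) / 2
      rw [add_one_mul_add_two_div_two]
      omega
    rw [mul_comm _ (X ^ _), mul_assoc, coeff_X_pow_mul_of_lt _ this]
  rw [eq_sum_add_of_add_X_pow_mul hV (n + 2), map_add, htail, add_zero, hpartial, map_sub,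
    map_sub, falseTheta, coeff_formalSum, map_sum]

theorem qPochInf_sq_mul_formalSum :
    qPochInf ^ 2 * formalSum (fun m => X ^ m * ((qPoch m)⁻¹) ^ 2) = 1 - falseTheta := by
  rw [mul_formalSum _ fun m k h => coeff_X_pow_mul_of_lt _ h,
    ← eq_one_sub_falseTheta_of_add_X_pow_mul tailPairSum_add_X_pow_mul, tailPairSum]
  congr 1
  funext m
  have hinv : qPoch m * (qPoch m)⁻¹ = 1 :=
    PowerSeries.mul_inv_cancel _ (by simp [constantCoeff_qPoch])
  rw [← qPoch_mul_qPochTail m, add_zero]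
  linear_combination X ^ m * qPochTail ℚ (m + 1) ^ 2 * (qPoch m * (qPoch m)⁻¹ + 1) * hinv

/-- `∑_{m ≥ 0} q^m/((q;q)_m)² = ((q;q)_∞)⁻² (1 - L(q))`, the generating function
identity for stacks with summits. -/
theorem stacksWithSummits_genFn :
    formalSum (fun m => X ^ m * ((qPoch m)⁻¹) ^ 2) =
      (qPochInf⁻¹) ^ 2 * (1 - falseTheta) := by
  have hinv : qPochInf * qPochInf⁻¹ = 1 :=
    PowerSeries.mul_inv_cancel _ (by simp [constantCoeff_qPochInf])
  linear_combination (qPochInf⁻¹) ^ 2 * qPochInf_sq_mul_formalSum -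
    formalSum (fun m => X ^ m * ((qPoch m)⁻¹) ^ 2) * (qPochInf * qPochInf⁻¹ + 1) * hinv
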